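/- Soundness and completeness of equational logic: for a many-sorted signature Σ, a set E of equations, and terms t, s of the same sort, E proves t ≈ s (by the rules of equational deduction: axioms in E, reflexivity, symmetry, transitivity, substitution of terms for variables, and congruence with respect to operation symbols) if and only if every Σ-algebra satisfying all equations of E satisfies t ≈ s. -/
import Mathlib


/-! **Statement 2.** Soundness and completeness of many-sorted equational logic. -/

/-- A many-sorted signature: operation symbols with input sorts and an output sort. -/
structure Sig (S : Type) : Type 1 where
  Op : Type
  ar : Op → List S
  res : Op → S

/-- Terms of each sort over a signature `Σ` and sorted variables `V`. -/
inductive Tm {S : Type} (V : S → Type) (σ : Sig S) : S → Type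
  | var {s : S} : V s → Tm V σ s
  | app (o : σ.Op) (args : ∀ i : Fin (σ.ar o).length, Tm V σ ((σ.ar o).get i)) :
      Tm V σ (σ.res o)

/-- A `Σ`-algebra: a family of carriers together with an interpretation of each
operation symbol. -/
structure Alg {S : Type} (σ : Sig S) : Type 1 where
  carrier : S → Type
  interp : ∀ o : σ.Op,
    (∀ i : Fin (σ.ar o).length, carrier ((σ.ar o).get i)) → carrier (σ.res o)

/-- Interpretation of a term under an assignment of the variables. -/
def Alg.eval {S : Type} {V : S → Type} {σ : Sig S} (A : Alg σ)
    (v : ∀ s, V s → A.carrier s) : ∀ {s : S}, Tm V σ s → A.carrier s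
  | _, .var x => v _ x
  | _, .app o args => A.interp o (fun i => A.eval v (args i))

/-- An equation: a pair of terms of the same sort. -/
def Eqn {S : Type} (V : S → Type) (σ : Sig S) : Type := Σ s : S, Tm V σ s × Tm V σ s

/-- An algebra satisfies an equation if the interpretations of the two terms agree
under every assignment of the variables. -/
def Alg.Satisfies {S : Type} {V : S → Type} {σ : Sig S} (A : Alg σ) (e : Eqn V σ) : Prop :=
  ∀ v : ∀ s, V s → A.carrier s, A.eval v e.2.1 = A.eval v e.2.2

/-- Simultaneous substitution of terms for variables. -/
def Tm.subst {S : Type} {V : S → Type} {σ : Sig S} (θ : ∀ s, V s → Tm V σ s) :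
    ∀ {s : S}, Tm V σ s → Tm V σ s
  | _, .var x => θ _ x
  | _, .app o args => .app o (fun i => (args i).subst θ)

/-- Equational deduction `E ⊢ t ≈ s`: axioms, reflexivity, symmetry, transitivity,
substitution, and congruence with respect to the operation symbols. -/
inductive Proves {S : Type} {V : S → Type} {σ : Sig S} (E : Set (Eqn V σ)) :
    ∀ {s : S}, Tm V σ s → Tm V σ s → Prop
  | ax {s : S} {t u : Tm V σ s} : (⟨s, t, u⟩ : Eqn V σ) ∈ E → Proves E t u
  | refl {s : S} (t : Tm V σ s) : Proves E t t
  | symm {s : S} {t u : Tm V σ s} : Proves E t u → Proves E u t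
  | trans {s : S} {t u w : Tm V σ s} : Proves E t u → Proves E u w → Proves E t w
  | subst {s : S} {t u : Tm V σ s} (θ : ∀ s, V s → Tm V σ s) :
      Proves E t u → Proves E (t.subst θ) (u.subst θ)
  | congr (o : σ.Op) (ts us : ∀ i : Fin (σ.ar o).length, Tm V σ ((σ.ar o).get i)) :
      (∀ i, Proves E (ts i) (us i)) → Proves E (.app o ts) (.app o us)

section Aux

variable {S : Type} {V : S → Type} {σ : Sig S}

/-- Evaluation commutes with substitution. -/
lemma eval_subst (A : Alg σ) (v : ∀ s, V s → A.carrier s)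
    (θ : ∀ s, V s → Tm V σ s) : ∀ {s : S} (t : Tm V σ s),
    A.eval v (t.subst θ) = A.eval (fun s x => A.eval v (θ s x)) t
  | _, .var x => rfl
  | _, .app o args => by
      simp only [Tm.subst, Alg.eval]
      congr 1
      funext i
      exact eval_subst A v θ (args i)

lemma subst_var : ∀ {s : S} (t : Tm V σ s),
    t.subst (fun _ x => .var x) = t
  | _, .var x => rfl
  | _, .app o args => by
      simp only [Tm.subst]
      congr 1
      funext i
      exact subst_var (args i)

/-- Soundness. -/
lemma sound (E : Set (Eqn V σ)) {s : S} {t u : Tm V σ s} (h : Proves E t u)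
    (A : Alg σ) (hA : ∀ e ∈ E, A.Satisfies e) :
    ∀ v : ∀ s, V s → A.carrier s, A.eval v t = A.eval v u := by
  induction h with
  | ax h => exact hA _ h
  | refl t => intro v; rfl
  | symm _ ih => intro v; exact (ih v).symm
  | trans _ _ ih1 ih2 => intro v; exact (ih1 v).trans (ih2 v)
  | subst θ _ ih =>
      intro v
      rw [eval_subst, eval_subst]
      exact ih _
  | congr o ts us _ ih =>
      intro v
      simp only [Alg.eval]
      congr 1
      funext i
      exact ih i v

variable (E : Set (Eqn V σ))

/-- The per-sort setoid of provable equality. -/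
def provSetoid (s : S) : Setoid (Tm V σ s) :=
  ⟨Proves E, ⟨Proves.refl, Proves.symm, Proves.trans⟩⟩

/-- The term algebra modulo provable equality. -/
noncomputable def termAlg : Alg σ where
  carrier s := Quotient (provSetoid E s)
  interp o args := Quotient.mk _ (.app o (fun i => (args i).out))

lemma out_rel {s : S} (q : Quotient (provSetoid E s)) (t : Tm V σ s)
    (h : Quotient.mk _ t = q) : Proves E q.out t :=
  Quotient.exact (q.out_eq.trans h.symm)

lemma termAlg_eval (θ : ∀ s, V s → Tm V σ s) :
    ∀ {s : S} (t : Tm V σ s),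
    (termAlg E).eval (fun s x => Quotient.mk _ (θ s x)) t
      = Quotient.mk _ (t.subst θ)
  | _, .var x => rfl
  | _, .app o args => by
      simp only [Alg.eval, Tm.subst, termAlg]
      apply Quotient.sound
      exact Proves.congr o _ _ (fun i =>
        out_rel E _ _ (termAlg_eval θ (args i)).symm)

end Aux

/-- Soundness and completeness: `E ⊢ t ≈ s` iff every `Σ`-algebra
satisfying all equations of `E` satisfies `t ≈ s` (the sets of variables of each sort
being infinite). -/
theorem stmt2 {S : Type} {V : S → Type} (σ : Sig S) (hV : ∀ s, Infinite (V s))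
    (E : Set (Eqn V σ)) {s : S} (t u : Tm V σ s) :
    Proves E t u ↔
      ∀ A : Alg σ, (∀ e ∈ E, A.Satisfies e) → A.Satisfies ⟨s, t, u⟩ := by
  constructor
  · intro h A hA
    exact sound E h A hA
  · intro h
    have hsat : ∀ e ∈ E, (termAlg E).Satisfies e := by
      rintro ⟨s', p, q⟩ hpq v
      have hv : v = fun s x => Quotient.mk _ ((v s x).out) := by
        funext s x; exact ((v s x).out_eq).symm
      rw [hv]
      show (termAlg E).eval _ p = (termAlg E).eval _ q
      rw [termAlg_eval, termAlg_eval]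
      exact Quotient.sound (Proves.subst _ (Proves.ax hpq))
    have := h (termAlg E) hsat (fun s x => Quotient.mk _ (.var x))
    simp only [Alg.Satisfies] at this
    rw [termAlg_eval E (fun _ x => .var x) t,
        termAlg_eval E (fun _ x => .var x) u, subst_var, subst_var] at this
    exact Quotient.exact this
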